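/- Let X : Σ → ℝ⁴₁ be a spacelike zero mean curvature immersion, and at a point p let the null normal directions be written ξ = α(ν₁,1), η = β(ν₂,1) with ν₁, ν₂ : Σ → S². If the Gauss curvature satisfies K(p) ≠ 0, then both dν₁(p) ≠ 0 and dν₂(p) ≠ 0; hence near p the surface is a spherical graph with respect to each of the two families of null normal directions. -/

import Mathlib

/- STATEMENT 19: for a spacelike zero mean curvature immersion X : Σ → ℝ⁴₁ with null
normal directions ξ = α(ν₁,1), η = β(ν₂,1), ν₁, ν₂ : Σ → S², if the Gauss curvature
(K = −2e^{−ρ}ρ_{zz̄}) satisfies K(p) ≠ 0 then dν₁(p) ≠ 0 and dν₂(p) ≠ 0, and near p the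
surface is a spherical graph with respect to each family of null normal directions
(ν₁ and ν₂ are injective near p). -/
noncomputable section
open Complex

/-- Wirtinger derivative ∂/∂z -/
def wder (f : ℂ → ℂ) (z : ℂ) : ℂ :=
  (fderiv ℝ f z 1 - Complex.I * fderiv ℝ f z Complex.I) / 2

/-- Wirtinger derivative ∂/∂z̄ -/
def wbar (f : ℂ → ℂ) (z : ℂ) : ℂ :=
  (fderiv ℝ f z 1 + Complex.I * fderiv ℝ f z Complex.I) / 2

/-- Lorentz-Minkowski product on ℝ⁴₁, signature (+,+,+,−) -/
def minkR (v w : Fin 4 → ℝ) : ℝ := v 0 * w 0 + v 1 * w 1 + v 2 * w 2 - v 3 * w 3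

/-- its complex-bilinear extension -/
def minkC (v w : Fin 4 → ℂ) : ℂ := v 0 * w 0 + v 1 * w 1 + v 2 * w 2 - v 3 * w 3

/-- z-derivative of an ℝ⁴-valued map: X_z -/
def cz (X : ℂ → Fin 4 → ℝ) (z : ℂ) : Fin 4 → ℂ := fun i => wder (fun w => ((X w i : ℝ) : ℂ)) z

/-- z-derivative of a ℂ⁴-valued map -/
def dz (F : ℂ → Fin 4 → ℂ) (z : ℂ) : Fin 4 → ℂ := fun i => wder (fun w => F w i) z

/-- z̄-derivative of a ℂ⁴-valued map -/
def dzbar (F : ℂ → Fin 4 → ℂ) (z : ℂ) : Fin 4 → ℂ := fun i => wbar (fun w => F w i) z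

lemma wder_congr {f g : ℂ → ℂ} {z : ℂ} (h : f =ᶠ[nhds z] g) : wder f z = wder g z := by
  unfold wder; rw [h.fderiv_eq]

lemma wbar_congr {f g : ℂ → ℂ} {z : ℂ} (h : f =ᶠ[nhds z] g) : wbar f z = wbar g z := by
  unfold wbar; rw [h.fderiv_eq]

lemma wder_const (c : ℂ) (z : ℂ) : wder (fun _ => c) z = 0 := by
  unfold wder; simp [fderiv_const]

lemma clm_decomp (T : ℂ →L[ℝ] ℂ) (v : ℂ) :
    T v = ((T 1 - Complex.I * T Complex.I)/2) * v + ((T 1 + Complex.I * T Complex.I)/2) * (starRingEnd ℂ v) := by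
  have hv : v = v.re • (1:ℂ) + v.im • (Complex.I) := by
    simp [Complex.real_smul, Complex.re_add_im]
  rw [hv, map_add, map_smul, map_smul]
  have hcv : starRingEnd ℂ (v.re • (1:ℂ) + v.im • Complex.I)
      = (v.re : ℂ) - (v.im : ℂ) * Complex.I := by
    simp only [Complex.real_smul, map_add, map_mul, map_one, Complex.conj_ofReal, Complex.conj_I]
    ring
  rw [hcv]
  simp only [Complex.real_smul, smul_eq_mul]
  have hI := Complex.I_sq
  ring_nf
  linear_combination (↑v.im * T Complex.I) * Complex.I_sq

lemma fderiv_apply_eq (f : ℂ → ℂ) (z v : ℂ) :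
    fderiv ℝ f z v = wder f z * v + wbar f z * (starRingEnd ℂ v) := clm_decomp _ v

lemma wder_mul {f g : ℂ → ℂ} {z : ℂ} (hf : DifferentiableAt ℝ f z)
    (hg : DifferentiableAt ℝ g z) :
    wder (fun w => f w * g w) z = f z * wder g z + g z * wder f z := by
  unfold wder
  rw [fderiv_fun_mul hf hg]
  simp only [ContinuousLinearMap.add_apply, ContinuousLinearMap.smul_apply, smul_eq_mul]
  ring

lemma wbar_mul {f g : ℂ → ℂ} {z : ℂ} (hf : DifferentiableAt ℝ f z)
    (hg : DifferentiableAt ℝ g z) :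
    wbar (fun w => f w * g w) z = f z * wbar g z + g z * wbar f z := by
  unfold wbar
  rw [fderiv_fun_mul hf hg]
  simp only [ContinuousLinearMap.add_apply, ContinuousLinearMap.smul_apply, smul_eq_mul]
  ring

lemma wbar_add {f g : ℂ → ℂ} {z : ℂ} (hf : DifferentiableAt ℝ f z)
    (hg : DifferentiableAt ℝ g z) :
    wbar (fun w => f w + g w) z = wbar f z + wbar g z := by
  unfold wbar
  rw [fderiv_fun_add hf hg]
  simp only [ContinuousLinearMap.add_apply]
  ring

lemma contDiffOn_wder {f : ℂ → ℂ} {U : Set ℂ} (hU : IsOpen U)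
    (hf : ContDiffOn ℝ (⊤ : ℕ∞) f U) : ContDiffOn ℝ (⊤ : ℕ∞) (wder f) U := by
  have h1 : ContDiffOn ℝ (⊤ : ℕ∞) (fderiv ℝ f) U := hf.fderiv_of_isOpen hU (by simp)
  have h2 : ContDiffOn ℝ (⊤ : ℕ∞) (fun z => (fderiv ℝ f z) 1) U :=
    h1.clm_apply contDiffOn_const
  have h3 : ContDiffOn ℝ (⊤ : ℕ∞) (fun z => (fderiv ℝ f z) Complex.I) U :=
    h1.clm_apply contDiffOn_const
  exact ((h2.sub (contDiffOn_const.mul h3)).div_const 2)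

lemma diffAt_of_cdOn {f : ℂ → ℂ} {U : Set ℂ} (hU : IsOpen U) (hf : ContDiffOn ℝ (⊤ : ℕ∞) f U)
    {z : ℂ} (hz : z ∈ U) : DifferentiableAt ℝ f z :=
  ((hf.differentiableOn (by simp)).differentiableAt (hU.mem_nhds hz))

/-- fderiv of the complexification of a real-valued function -/
lemma fderiv_ofReal_comp {f : ℂ → ℝ} {z : ℂ} (hf : DifferentiableAt ℝ f z) (v : ℂ) :
    fderiv ℝ (fun w => ((f w : ℝ) : ℂ)) z v = ((fderiv ℝ f z v : ℝ) : ℂ) := by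
  have : fderiv ℝ (fun w => ((f w : ℝ) : ℂ)) z
      = (Complex.ofRealCLM).comp (fderiv ℝ f z) := by
    exact (Complex.ofRealCLM.hasFDerivAt.comp z hf.hasFDerivAt).fderiv
  rw [this]; rfl

/-- for a real-valued function, the z̄-Wirtinger derivative is the conjugate
of the z-Wirtinger derivative -/
lemma wbar_eq_conj_wder_real {f : ℂ → ℝ} {z : ℂ} (hf : DifferentiableAt ℝ f z) :
    wbar (fun w => ((f w : ℝ) : ℂ)) z = starRingEnd ℂ (wder (fun w => ((f w : ℝ) : ℂ)) z) := by
  unfold wder wbar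
  rw [fderiv_ofReal_comp hf 1, fderiv_ofReal_comp hf Complex.I]
  rw [map_div₀, map_sub, map_mul]
  simp only [Complex.conj_ofReal, Complex.conj_I, map_ofNat]
  ring

/-- Schwarz symmetry: the Wirtinger derivatives commute for smooth functions. -/
lemma wder_wbar_comm {f : ℂ → ℂ} {U : Set ℂ} (hU : IsOpen U)
    (hf : ContDiffOn ℝ (⊤ : ℕ∞) f U) {p : ℂ} (hp : p ∈ U) :
    wder (wbar f) p = wbar (wder f) p := by
  have hfd : ContDiffOn ℝ (⊤ : ℕ∞) (fderiv ℝ f) U := hf.fderiv_of_isOpen hU (by simp)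
  have hdiff : DifferentiableAt ℝ (fderiv ℝ f) p :=
    (hfd.differentiableOn (by simp)).differentiableAt (hU.mem_nhds hp)
  have happ : ∀ v : ℂ, DifferentiableAt ℝ (fun w => (fderiv ℝ f w) v) p := by
    intro v
    exact hdiff.clm_apply (differentiableAt_const v)
  have key : ∀ v u : ℂ, fderiv ℝ (fun w => (fderiv ℝ f w) v) p u
      = (fderiv ℝ (fderiv ℝ f) p u) v := by
    intro v u
    have h := fderiv_clm_apply hdiff (differentiableAt_const v)
    rw [h]
    simp
  have hsymm : (fderiv ℝ (fderiv ℝ f) p 1) Complex.I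
      = (fderiv ℝ (fderiv ℝ f) p Complex.I) 1 := by
    have hca : ContDiffAt ℝ 2 f p := by
      have := hf.contDiffAt (hU.mem_nhds hp)
      exact this.of_le (WithTop.coe_le_coe.mpr (le_top : (2 : ℕ∞) ≤ ⊤))
    exact hca.isSymmSndFDerivAt (by simp) 1 Complex.I
  have e1 : ∀ u : ℂ, fderiv ℝ (wbar f) p u
      = ((fderiv ℝ (fderiv ℝ f) p u) 1 + Complex.I * (fderiv ℝ (fderiv ℝ f) p u) Complex.I) / 2 := by
    intro u
    have : wbar f = fun w => ((fderiv ℝ f w) 1 + Complex.I * (fderiv ℝ f w) Complex.I) / 2 := rfl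
    rw [this]
    rw [show (fun w => ((fderiv ℝ f w) 1 + Complex.I * (fderiv ℝ f w) Complex.I) / 2)
        = fun w => ((fderiv ℝ f w) 1 + Complex.I * (fderiv ℝ f w) Complex.I) * (2⁻¹ : ℂ) by
      funext w; ring]
    rw [fderiv_mul_const ((happ 1).fun_add ((differentiableAt_const Complex.I).fun_mul (happ Complex.I)))]
    rw [ContinuousLinearMap.smul_apply]
    rw [fderiv_fun_add (happ 1) ((differentiableAt_const Complex.I).fun_mul (happ Complex.I))]
    rw [ContinuousLinearMap.add_apply]
    rw [fderiv_const_mul (happ Complex.I)]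
    rw [ContinuousLinearMap.smul_apply]
    rw [key 1 u, key Complex.I u]
    simp only [smul_eq_mul]
    ring
  have e2 : ∀ u : ℂ, fderiv ℝ (wder f) p u
      = ((fderiv ℝ (fderiv ℝ f) p u) 1 - Complex.I * (fderiv ℝ (fderiv ℝ f) p u) Complex.I) / 2 := by
    intro u
    have : wder f = fun w => ((fderiv ℝ f w) 1 - Complex.I * (fderiv ℝ f w) Complex.I) / 2 := rfl
    rw [this]
    rw [show (fun w => ((fderiv ℝ f w) 1 - Complex.I * (fderiv ℝ f w) Complex.I) / 2)
        = fun w => ((fderiv ℝ f w) 1 - Complex.I * (fderiv ℝ f w) Complex.I) * (2⁻¹ : ℂ) by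
      funext w; ring]
    rw [fderiv_mul_const ((happ 1).fun_sub ((differentiableAt_const Complex.I).fun_mul (happ Complex.I)))]
    rw [ContinuousLinearMap.smul_apply]
    rw [fderiv_fun_sub (happ 1) ((differentiableAt_const Complex.I).fun_mul (happ Complex.I))]
    rw [ContinuousLinearMap.sub_apply]
    rw [fderiv_const_mul (happ Complex.I)]
    rw [ContinuousLinearMap.smul_apply]
    rw [key 1 u, key Complex.I u]
    simp only [smul_eq_mul]
    ring
  show (fderiv ℝ (wbar f) p 1 - Complex.I * fderiv ℝ (wbar f) p Complex.I) / 2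
      = (fderiv ℝ (wder f) p 1 + Complex.I * fderiv ℝ (wder f) p Complex.I) / 2
  rw [e1 1, e1 Complex.I, e2 1, e2 Complex.I]
  rw [hsymm]
  ring

/-- A strictly differentiable map with injective derivative is injective near the point. -/
lemma exists_injOn_of_hasStrictFDerivAt {f : ℂ → Fin 3 → ℝ} {L : ℂ →L[ℝ] (Fin 3 → ℝ)} {p : ℂ}
    (hf : HasStrictFDerivAt f L p) (hinj : Function.Injective L) :
    ∃ V ∈ nhds p, Set.InjOn f V := by
  obtain ⟨K, K0, hK⟩ := (LinearMap.injective_iff_antilipschitz (L : ℂ →ₗ[ℝ] (Fin 3 → ℝ))).mp hinj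
  have hc : (0:NNReal) < (2*K)⁻¹ := by positivity
  obtain ⟨s, hs, hap⟩ := hf.approximates_deriv_on_nhds (Or.inr hc)
  refine ⟨s, hs, fun x hx y hy hxy => ?_⟩
  have h1 : ‖f x - f y - L (x - y)‖ ≤ ((2*K)⁻¹ : NNReal) * ‖x - y‖ := hap x hx y hy
  rw [hxy, sub_self, zero_sub, norm_neg] at h1
  have h2 : ‖x - y‖ ≤ (K : ℝ) * ‖L (x - y)‖ := by
    have := hK.le_mul_dist x y
    rw [dist_eq_norm, dist_eq_norm] at this
    rw [← map_sub] at this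
    exact this
  have hK0' : (0:ℝ) < K := K0
  have h3 : ‖x - y‖ ≤ (K : ℝ) * (((2*K)⁻¹ : NNReal) * ‖x - y‖) := by
    calc ‖x - y‖ ≤ (K : ℝ) * ‖L (x - y)‖ := h2
    _ ≤ (K : ℝ) * (((2*K)⁻¹ : NNReal) * ‖x - y‖) := by
        apply mul_le_mul_of_nonneg_left h1 (le_of_lt hK0')
  have hco : ((((2:NNReal)*K)⁻¹ : NNReal) : ℝ) = (2 * (K:ℝ))⁻¹ := by
    push_cast
    simp
  rw [hco] at h3
  have h4 : ‖x - y‖ ≤ ‖x - y‖ / 2 := by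
    rw [div_eq_mul_inv]
    calc ‖x - y‖ ≤ (K : ℝ) * ((2 * (K:ℝ))⁻¹ * ‖x - y‖) := h3
    _ = ‖x - y‖ * 2⁻¹ := by field_simp
  have h5 : ‖x - y‖ ≤ 0 := by linarith
  have := norm_nonneg (x - y)
  have h6 : ‖x - y‖ = 0 := le_antisymm h5 this
  exact sub_eq_zero.mp (norm_eq_zero.mp h6)

lemma comp_cd {n : Type} [Fintype n] [DecidableEq n] {f : ℂ → n → ℝ} {U : Set ℂ}
    (hf : ContDiffOn ℝ (⊤ : ℕ∞) f U) (i : n) :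
    ContDiffOn ℝ (⊤ : ℕ∞) (fun w => ((f w i : ℝ) : ℂ)) U :=
  Complex.ofRealCLM.contDiff.comp_contDiffOn
    (((ContinuousLinearMap.proj (R := ℝ) (φ := fun _ : n => ℝ) i).contDiff).comp_contDiffOn hf)

set_option maxHeartbeats 1000000 in
lemma gauss_step (U : Set ℂ) (hU : IsOpen U)
    (X : ℂ → Fin 4 → ℝ) (ξ η : ℂ → Fin 4 → ℝ) (ρ : ℂ → ℝ) (φ ψ σ : ℂ → ℂ)
    (hX : ContDiffOn ℝ (⊤ : ℕ∞) X U) (hξ : ContDiffOn ℝ (⊤ : ℕ∞) ξ U) (hη : ContDiffOn ℝ (⊤ : ℕ∞) η U)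
    (hρ : ContDiffOn ℝ (⊤ : ℕ∞) ρ U) (hφ : ContDiffOn ℝ (⊤ : ℕ∞) φ U) (hψ : ContDiffOn ℝ (⊤ : ℕ∞) ψ U)
    (hconf : ∀ z ∈ U, minkC (cz X z) (cz X z) = 0 ∧
      minkC (cz X z) (fun i => starRingEnd ℂ (cz X z i)) = (Real.exp (ρ z) / 2 : ℝ))
    (hnormal : ∀ z ∈ U, minkC (cz X z) (fun i => ((ξ z i : ℝ) : ℂ)) = 0 ∧
      minkC (cz X z) (fun i => ((η z i : ℝ) : ℂ)) = 0)
    (hFrenet : ∀ z ∈ U, ∀ i, dz (cz X) z i =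
      wder (fun w => ((ρ w : ℝ) : ℂ)) z * cz X z i + (φ z / 2) * (ξ z i : ℂ)
        + (ψ z / 2) * (η z i : ℂ))
    (hharm : ∀ z ∈ U, ∀ i, dzbar (cz X) z i = 0)
    (hxiz : ∀ z ∈ U, ∀ i, cz ξ z i =
      -ψ z * Complex.exp (-(ρ z : ℂ)) * starRingEnd ℂ (cz X z i) + σ z * (ξ z i : ℂ))
    (hetaz : ∀ z ∈ U, ∀ i, cz η z i =
      -φ z * Complex.exp (-(ρ z : ℂ)) * starRingEnd ℂ (cz X z i) - σ z * (η z i : ℂ))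
    (p : ℂ) (hp : p ∈ U)
    (hK : (-2 : ℂ) * Complex.exp (-(ρ p : ℂ)) * wder (wbar fun w => ((ρ w : ℝ) : ℂ)) p ≠ 0) :
    φ p ≠ 0 ∧ ψ p ≠ 0 := by
  classical
  set ρc : ℂ → ℂ := fun w => ((ρ w : ℝ) : ℂ) with hρc
  set EXP : ℂ := Complex.exp (-(ρ p : ℂ)) with hEXP
  have hEXPr : EXP = ((Real.exp (-(ρ p)) : ℝ) : ℂ) := by
    rw [hEXP, Complex.ofReal_exp, Complex.ofReal_neg]
  have hEXPc : starRingEnd ℂ EXP = EXP := by rw [hEXPr]; exact Complex.conj_ofReal _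
  set R : ℂ := wder (wbar ρc) p with hR
  -- smoothness of the various component functions
  have hρcs : ContDiffOn ℝ (⊤ : ℕ∞) ρc U := Complex.ofRealCLM.contDiff.comp_contDiffOn hρ
  have hwρ : ContDiffOn ℝ (⊤ : ℕ∞) (wder ρc) U := contDiffOn_wder hU hρcs
  have dwρ : DifferentiableAt ℝ (wder ρc) p := diffAt_of_cdOn hU hwρ hp
  have hGf : ∀ i : Fin 4, ContDiffOn ℝ (⊤ : ℕ∞) (wder (fun w => ((X w i : ℝ) : ℂ))) U :=
    fun i => contDiffOn_wder hU (comp_cd hX i)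
  have dGf : ∀ i : Fin 4, DifferentiableAt ℝ (wder (fun w => ((X w i : ℝ) : ℂ))) p :=
    fun i => diffAt_of_cdOn hU (hGf i) hp
  have dφ : DifferentiableAt ℝ φ p := diffAt_of_cdOn hU hφ hp
  have dψ : DifferentiableAt ℝ ψ p := diffAt_of_cdOn hU hψ hp
  have dξc : ∀ i : Fin 4, DifferentiableAt ℝ (fun w => ((ξ w i : ℝ) : ℂ)) p :=
    fun i => diffAt_of_cdOn hU (comp_cd hξ i) hp
  have dηc : ∀ i : Fin 4, DifferentiableAt ℝ (fun w => ((η w i : ℝ) : ℂ)) p :=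
    fun i => diffAt_of_cdOn hU (comp_cd hη i) hp
  -- the scalar equations E_i
  have hwbR : wbar (wder ρc) p = R := (wder_wbar_comm hU hρcs hp).symm
  have Eq : ∀ i : Fin 4, 0 = cz X p i * R
      + (φ p / 2) * (-(starRingEnd ℂ (ψ p)) * EXP * cz X p i + starRingEnd ℂ (σ p) * (ξ p i : ℂ))
      + ((ξ p i : ℝ) : ℂ) * wbar (fun z => φ z / 2) p
      + (ψ p / 2) * (-(starRingEnd ℂ (φ p)) * EXP * cz X p i - starRingEnd ℂ (σ p) * (η p i : ℂ))
      + ((η p i : ℝ) : ℂ) * wbar (fun z => ψ z / 2) p := by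
    intro i
    -- left side is zero
    have hL : wbar (wder (wder (fun w => ((X w i : ℝ) : ℂ)))) p = 0 := by
      rw [← wder_wbar_comm hU (hGf i) hp]
      have hz : wbar (wder (fun w => ((X w i : ℝ) : ℂ))) =ᶠ[nhds p] (fun _ => (0 : ℂ)) := by
        filter_upwards [hU.mem_nhds hp] with z hz
        exact hharm z hz i
      rw [wder_congr hz, wder_const]
    -- Frenet equation as eventual equality
    have hfr_ev : wder (wder (fun w => ((X w i : ℝ) : ℂ))) =ᶠ[nhds p]
        (fun z => (wder ρc z * wder (fun w => ((X w i : ℝ) : ℂ)) z + (φ z / 2) * ((ξ z i : ℝ) : ℂ))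
          + (ψ z / 2) * ((η z i : ℝ) : ℂ)) := by
      filter_upwards [hU.mem_nhds hp] with z hz
      exact hFrenet z hz i
    have hsplit := wbar_congr hfr_ev
    rw [hL] at hsplit
    -- expand the right side
    have d1 : DifferentiableAt ℝ (fun z => wder ρc z * wder (fun w => ((X w i : ℝ) : ℂ)) z) p :=
      dwρ.mul (dGf i)
    have dφ2 : DifferentiableAt ℝ (fun z => φ z / 2) p := by
      simpa [div_eq_mul_inv] using dφ.mul_const ((2:ℂ)⁻¹)
    have dψ2 : DifferentiableAt ℝ (fun z => ψ z / 2) p := by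
      simpa [div_eq_mul_inv] using dψ.mul_const ((2:ℂ)⁻¹)
    have d2 : DifferentiableAt ℝ (fun z => (φ z / 2) * ((ξ z i : ℝ) : ℂ)) p :=
      dφ2.mul (dξc i)
    have d3 : DifferentiableAt ℝ (fun z => (ψ z / 2) * ((η z i : ℝ) : ℂ)) p :=
      dψ2.mul (dηc i)
    rw [wbar_add (d1.fun_add d2) d3, wbar_add d1 d2, wbar_mul dwρ (dGf i),
      wbar_mul dφ2 (dξc i), wbar_mul dψ2 (dηc i)] at hsplit
    -- evaluate the pieces
    have hbG : wbar (wder (fun w => ((X w i : ℝ) : ℂ))) p = 0 := hharm p hp i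
    have hbξ : wbar (fun w => ((ξ w i : ℝ) : ℂ)) p
        = starRingEnd ℂ (wder (fun w => ((ξ w i : ℝ) : ℂ)) p) :=
      wbar_eq_conj_wder_real (f := fun w => ξ w i)
        (((ContinuousLinearMap.proj (R := ℝ) (φ := fun _ : Fin 4 => ℝ) i).differentiableAt).comp p
          ((hξ.differentiableOn (by simp)).differentiableAt (hU.mem_nhds hp)))
    have hbη : wbar (fun w => ((η w i : ℝ) : ℂ)) p
        = starRingEnd ℂ (wder (fun w => ((η w i : ℝ) : ℂ)) p) :=
      wbar_eq_conj_wder_real (f := fun w => η w i)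
        (((ContinuousLinearMap.proj (R := ℝ) (φ := fun _ : Fin 4 => ℝ) i).differentiableAt).comp p
          ((hη.differentiableOn (by simp)).differentiableAt (hU.mem_nhds hp)))
    have hxz : wder (fun w => ((ξ w i : ℝ) : ℂ)) p
        = -ψ p * EXP * starRingEnd ℂ (cz X p i) + σ p * (ξ p i : ℂ) := hxiz p hp i
    have hez : wder (fun w => ((η w i : ℝ) : ℂ)) p
        = -φ p * EXP * starRingEnd ℂ (cz X p i) - σ p * (η p i : ℂ) := hetaz p hp i
    have hcxz : starRingEnd ℂ (wder (fun w => ((ξ w i : ℝ) : ℂ)) p)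
        = -(starRingEnd ℂ (ψ p)) * EXP * cz X p i + starRingEnd ℂ (σ p) * (ξ p i : ℂ) := by
      rw [hxz]
      simp only [map_add, map_mul, map_neg, Complex.conj_conj, hEXPc, Complex.conj_ofReal]
    have hcez : starRingEnd ℂ (wder (fun w => ((η w i : ℝ) : ℂ)) p)
        = -(starRingEnd ℂ (φ p)) * EXP * cz X p i - starRingEnd ℂ (σ p) * (η p i : ℂ) := by
      rw [hez]
      simp only [map_add, map_sub, map_mul, map_neg, Complex.conj_conj, hEXPc,
        Complex.conj_ofReal]
    rw [hbG, hbξ, hbη, hcxz, hcez, hwbR] at hsplit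
    have hval : wder (fun w => ((X w i : ℝ) : ℂ)) p = cz X p i := rfl
    rw [hval] at hsplit
    linear_combination hsplit
  -- pairing with the conjugate of cz X p
  have e_gc : cz X p 0 * starRingEnd ℂ (cz X p 0) + cz X p 1 * starRingEnd ℂ (cz X p 1)
      + cz X p 2 * starRingEnd ℂ (cz X p 2) - cz X p 3 * starRingEnd ℂ (cz X p 3)
      = ((Real.exp (ρ p) : ℝ) : ℂ) / 2 := by
    have h := (hconf p hp).2
    unfold minkC at h
    simp only at h
    rw [h]
    push_cast; ring
  have hN1 := (hnormal p hp).1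
  have hN2 := (hnormal p hp).2
  unfold minkC at hN1 hN2
  simp only at hN1 hN2
  have hN1c : starRingEnd ℂ (cz X p 0) * ((ξ p 0 : ℝ) : ℂ)
      + starRingEnd ℂ (cz X p 1) * ((ξ p 1 : ℝ) : ℂ)
      + starRingEnd ℂ (cz X p 2) * ((ξ p 2 : ℝ) : ℂ)
      - starRingEnd ℂ (cz X p 3) * ((ξ p 3 : ℝ) : ℂ) = 0 := by
    have h := congrArg (starRingEnd ℂ) hN1
    simpa only [map_add, map_sub, map_mul, map_zero, Complex.conj_ofReal] using h
  have hN2c : starRingEnd ℂ (cz X p 0) * ((η p 0 : ℝ) : ℂ)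
      + starRingEnd ℂ (cz X p 1) * ((η p 1 : ℝ) : ℂ)
      + starRingEnd ℂ (cz X p 2) * ((η p 2 : ℝ) : ℂ)
      - starRingEnd ℂ (cz X p 3) * ((η p 3 : ℝ) : ℂ) = 0 := by
    have h := congrArg (starRingEnd ℂ) hN2
    simpa only [map_add, map_sub, map_mul, map_zero, Complex.conj_ofReal] using h
  -- assemble
  have final : (R - (φ p * starRingEnd ℂ (ψ p) + ψ p * starRingEnd ℂ (φ p)) / 2 * EXP)
      * (((Real.exp (ρ p) : ℝ) : ℂ) / 2) = 0 := by
    linear_combination (starRingEnd ℂ (cz X p 0)) * (Eq 0).symm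
      + (starRingEnd ℂ (cz X p 1)) * (Eq 1).symm
      + (starRingEnd ℂ (cz X p 2)) * (Eq 2).symm
      - (starRingEnd ℂ (cz X p 3)) * (Eq 3).symm
      - (R - (φ p * starRingEnd ℂ (ψ p) + ψ p * starRingEnd ℂ (φ p)) / 2 * EXP) * e_gc
      - (φ p / 2 * starRingEnd ℂ (σ p) + wbar (fun z => φ z / 2) p) * hN1c
      - (wbar (fun z => ψ z / 2) p - ψ p / 2 * starRingEnd ℂ (σ p)) * hN2c
  have hexp_ne : (((Real.exp (ρ p) : ℝ) : ℂ) / 2) ≠ 0 := by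
    simp [Real.exp_ne_zero]
  have hRval : R = (φ p * starRingEnd ℂ (ψ p) + ψ p * starRingEnd ℂ (φ p)) / 2 * EXP := by
    have h := (mul_eq_zero.mp final).resolve_right hexp_ne
    linear_combination h
  constructor
  · intro h0
    apply hK
    rw [hRval, h0]
    simp
  · intro h0
    apply hK
    rw [hRval, h0]
    simp

set_option maxHeartbeats 1000000 in
lemma aux_main (U : Set ℂ) (hU : IsOpen U)
    (X : ℂ → Fin 4 → ℝ) (ξ : ℂ → Fin 4 → ℝ) (ρ : ℂ → ℝ) (ψ σ : ℂ → ℂ)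
    (ν : ℂ → Fin 3 → ℝ) (α : ℂ → ℝ)
    (hX : ContDiffOn ℝ (⊤ : ℕ∞) X U) (hξs : ContDiffOn ℝ (⊤ : ℕ∞) ξ U) (hν : ContDiffOn ℝ (⊤ : ℕ∞) ν U)
    (hconf : ∀ z ∈ U, minkC (cz X z) (cz X z) = 0 ∧
      minkC (cz X z) (fun i => starRingEnd ℂ (cz X z i)) = (Real.exp (ρ z) / 2 : ℝ))
    (hnormalξ : ∀ z ∈ U, minkC (cz X z) (fun i => ((ξ z i : ℝ) : ℂ)) = 0)
    (hxiz : ∀ z ∈ U, ∀ i, cz ξ z i =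
      -ψ z * Complex.exp (-(ρ z : ℂ)) * starRingEnd ℂ (cz X z i) + σ z * (ξ z i : ℂ))
    (hα : ∀ z ∈ U, α z ≠ 0)
    (hξν : ∀ z ∈ U, (∀ i : Fin 3, ξ z i.castSucc = α z * ν z i) ∧ ξ z 3 = α z)
    (hνS : ∀ z ∈ U, ∑ i : Fin 3, (ν z i)^2 = 1)
    (p : ℂ) (hp : p ∈ U) (hψp : ψ p ≠ 0) :
    fderiv ℝ ν p ≠ 0 ∧ ∃ V ∈ nhds p, Set.InjOn ν V := by
  classical
  set A : ℂ := ((α p : ℝ) : ℂ) with hA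
  set E : ℂ := Complex.exp (-(ρ p : ℂ)) with hE
  set K : ℂ := -ψ p * E with hK
  set c : Fin 3 → ℂ := fun i => wder (fun w => ((ν w i : ℝ) : ℂ)) p with hc
  have hAne : A ≠ 0 := by simpa [hA] using (hα p hp)
  have hEne : E ≠ 0 := Complex.exp_ne_zero _
  have hKne : K ≠ 0 := by simp [hK, hψp, hEne]
  have hνdAt : ∀ i : Fin 3, DifferentiableAt ℝ (fun w => ((ν w i : ℝ) : ℂ)) p :=
    fun i => diffAt_of_cdOn hU (comp_cd hν i) hp
  have hξdAt : ∀ i : Fin 4, DifferentiableAt ℝ (fun w => ((ξ w i : ℝ) : ℂ)) p :=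
    fun i => diffAt_of_cdOn hU (comp_cd hξs i) hp
  have hαdAt : DifferentiableAt ℝ (fun w => ((α w : ℝ) : ℂ)) p := by
    have hev3 : (fun w => ((α w : ℝ) : ℂ)) =ᶠ[nhds p] (fun w => ((ξ w 3 : ℝ) : ℂ)) := by
      filter_upwards [hU.mem_nhds hp] with z hz
      rw [(hξν z hz).2]
    exact (Filter.EventuallyEq.differentiableAt_iff hev3).mpr (hξdAt 3)
  -- the key component formula
  have hstep : ∀ i : Fin 3, A * c i
      = K * (starRingEnd ℂ (cz X p (i.castSucc)) - (ν p i : ℂ) * starRingEnd ℂ (cz X p 3)) := by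
    intro i
    have hev : (fun w => ((ξ w i.castSucc : ℝ) : ℂ))
        =ᶠ[nhds p] (fun w => ((α w : ℝ) : ℂ) * ((ν w i : ℝ) : ℂ)) := by
      filter_upwards [hU.mem_nhds hp] with z hz
      rw [(hξν z hz).1 i]
      push_cast; ring
    have hev3 : (fun w => ((ξ w 3 : ℝ) : ℂ)) =ᶠ[nhds p] (fun w => ((α w : ℝ) : ℂ)) := by
      filter_upwards [hU.mem_nhds hp] with z hz
      rw [(hξν z hz).2]
    have h1 : cz ξ p (i.castSucc) = A * c i + (ν p i : ℂ) * wder (fun w => ((α w : ℝ) : ℂ)) p := by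
      show wder (fun w => ((ξ w i.castSucc : ℝ) : ℂ)) p = _
      rw [wder_congr hev, wder_mul hαdAt (hνdAt i)]
    have h2 : wder (fun w => ((α w : ℝ) : ℂ)) p = cz ξ p 3 := (wder_congr hev3).symm
    have h3 := hxiz p hp (i.castSucc)
    have h4 := hxiz p hp 3
    have h5 : ((ξ p i.castSucc : ℝ) : ℂ) = A * (ν p i : ℂ) := by
      rw [(hξν p hp).1 i]; push_cast; ring
    have h6 : ((ξ p 3 : ℝ) : ℂ) = A := by rw [(hξν p hp).2]
    rw [h2, h4] at h1
    rw [h3, h5, h6] at h1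
    rw [hK]
    linear_combination -h1
  set g : Fin 4 → ℂ := cz X p with hg
  set n : Fin 3 → ℂ := fun i => ((ν p i : ℝ) : ℂ) with hn
  have hstep0 : A * c 0 = K * (starRingEnd ℂ (g 0) - n 0 * starRingEnd ℂ (g 3)) := by
    have := hstep 0
    rwa [show (0 : Fin 3).castSucc = (0 : Fin 4) from rfl] at this
  have hstep1 : A * c 1 = K * (starRingEnd ℂ (g 1) - n 1 * starRingEnd ℂ (g 3)) := by
    have := hstep 1
    rwa [show (1 : Fin 3).castSucc = (1 : Fin 4) from rfl] at this
  have hstep2 : A * c 2 = K * (starRingEnd ℂ (g 2) - n 2 * starRingEnd ℂ (g 3)) := by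
    have := hstep 2
    rwa [show (2 : Fin 3).castSucc = (2 : Fin 4) from rfl] at this
  have e_g : g 0 * g 0 + g 1 * g 1 + g 2 * g 2 - g 3 * g 3 = 0 := (hconf p hp).1
  have e_gc : g 0 * starRingEnd ℂ (g 0) + g 1 * starRingEnd ℂ (g 1) + g 2 * starRingEnd ℂ (g 2)
      - g 3 * starRingEnd ℂ (g 3) = ((Real.exp (ρ p) : ℝ) : ℂ) / 2 := by
    have h := (hconf p hp).2
    unfold minkC at h
    simp only at h
    rw [h]
    push_cast; ring
  have e_S : g 0 * n 0 + g 1 * n 1 + g 2 * n 2 = g 3 := by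
    have h0 := hnormalξ p hp
    unfold minkC at h0
    simp only at h0
    have h50 : ((ξ p 0 : ℝ) : ℂ) = A * n 0 := by
      rw [show (0 : Fin 4) = ((0 : Fin 3).castSucc) from rfl, (hξν p hp).1 0]; push_cast; ring
    have h51 : ((ξ p 1 : ℝ) : ℂ) = A * n 1 := by
      rw [show (1 : Fin 4) = ((1 : Fin 3).castSucc) from rfl, (hξν p hp).1 1]; push_cast; ring
    have h52 : ((ξ p 2 : ℝ) : ℂ) = A * n 2 := by
      rw [show (2 : Fin 4) = ((2 : Fin 3).castSucc) from rfl, (hξν p hp).1 2]; push_cast; ring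
    have h6 : ((ξ p 3 : ℝ) : ℂ) = A := by rw [(hξν p hp).2]
    rw [h50, h51, h52, h6] at h0
    have hz : A * (g 0 * n 0 + g 1 * n 1 + g 2 * n 2 - g 3) = 0 := by linear_combination h0
    have := (mul_eq_zero.mp hz).resolve_left hAne
    linear_combination this
  have e_unit : n 0 ^ 2 + n 1 ^ 2 + n 2 ^ 2 = 1 := by
    have h := hνS p hp
    rw [Fin.sum_univ_three] at h
    have h2 : ((ν p 0 ^ 2 + ν p 1 ^ 2 + ν p 2 ^ 2 : ℝ) : ℂ) = 1 := by rw [h]; norm_num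
    push_cast at h2
    simpa [hn] using h2
  have e_Sc : starRingEnd ℂ (g 0) * n 0 + starRingEnd ℂ (g 1) * n 1 + starRingEnd ℂ (g 2) * n 2
      = starRingEnd ℂ (g 3) := by
    have h := congrArg (starRingEnd ℂ) e_S
    simp only [map_add, map_mul] at h
    have hnr : ∀ i : Fin 3, starRingEnd ℂ (n i) = n i := fun i => Complex.conj_ofReal _
    rw [hnr 0, hnr 1, hnr 2] at h
    exact h
  have hnc : ∀ i : Fin 3, starRingEnd ℂ (n i) = n i := fun i => Complex.conj_ofReal _
  -- quadratic relations for w_i := g i - n i * g 3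
  have hsum2 : (g 0 - n 0 * g 3) ^ 2 + (g 1 - n 1 * g 3) ^ 2 + (g 2 - n 2 * g 3) ^ 2 = 0 := by
    linear_combination e_g - 2 * g 3 * e_S + g 3 ^ 2 * e_unit
  have hsumabs : (g 0 - n 0 * g 3) * starRingEnd ℂ (g 0 - n 0 * g 3)
      + (g 1 - n 1 * g 3) * starRingEnd ℂ (g 1 - n 1 * g 3)
      + (g 2 - n 2 * g 3) * starRingEnd ℂ (g 2 - n 2 * g 3)
      = ((Real.exp (ρ p) : ℝ) : ℂ) / 2 := by
    simp only [map_sub, map_mul, hnc 0, hnc 1, hnc 2]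
    linear_combination e_gc - starRingEnd ℂ (g 3) * e_S - g 3 * e_Sc
      + g 3 * starRingEnd ℂ (g 3) * e_unit
  have hconj2 : (starRingEnd ℂ (g 0) - n 0 * starRingEnd ℂ (g 3)) ^ 2
      + (starRingEnd ℂ (g 1) - n 1 * starRingEnd ℂ (g 3)) ^ 2
      + (starRingEnd ℂ (g 2) - n 2 * starRingEnd ℂ (g 3)) ^ 2 = 0 := by
    have h := congrArg (starRingEnd ℂ) hsum2
    simp only [map_add, map_pow, map_sub, map_mul, hnc 0, hnc 1, hnc 2, map_zero] at h
    exact h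
  have hc2sum : c 0 ^ 2 + c 1 ^ 2 + c 2 ^ 2 = 0 := by
    have h : A ^ 2 * (c 0 ^ 2 + c 1 ^ 2 + c 2 ^ 2) = 0 := by
      linear_combination (A * c 0 + K * (starRingEnd ℂ (g 0) - n 0 * starRingEnd ℂ (g 3))) * hstep0
        + (A * c 1 + K * (starRingEnd ℂ (g 1) - n 1 * starRingEnd ℂ (g 3))) * hstep1
        + (A * c 2 + K * (starRingEnd ℂ (g 2) - n 2 * starRingEnd ℂ (g 3))) * hstep2
        + K ^ 2 * hconj2
    exact (mul_eq_zero.mp h).resolve_left (pow_ne_zero 2 hAne)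
  have hcabs : c 0 * starRingEnd ℂ (c 0) + c 1 * starRingEnd ℂ (c 1)
      + c 2 * starRingEnd ℂ (c 2) ≠ 0 := by
    have hAc : starRingEnd ℂ A = A := Complex.conj_ofReal _
    have hstepc : ∀ i : Fin 3, (hh : A * c i
        = K * (starRingEnd ℂ (g i.castSucc) - n i * starRingEnd ℂ (g 3))) →
        A * starRingEnd ℂ (c i) = starRingEnd ℂ K * (g i.castSucc - n i * g 3) := by
      intro i hh
      have h := congrArg (starRingEnd ℂ) hh
      simp only [map_mul, map_sub, Complex.conj_conj, hAc, hnc i] at h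
      exact h
    have hstepc0 := hstepc 0 (by rwa [show (0 : Fin 3).castSucc = (0 : Fin 4) from rfl])
    have hstepc1 := hstepc 1 (by rwa [show (1 : Fin 3).castSucc = (1 : Fin 4) from rfl])
    have hstepc2 := hstepc 2 (by rwa [show (2 : Fin 3).castSucc = (2 : Fin 4) from rfl])
    rw [show (0 : Fin 3).castSucc = (0 : Fin 4) from rfl] at hstepc0
    rw [show (1 : Fin 3).castSucc = (1 : Fin 4) from rfl] at hstepc1
    rw [show (2 : Fin 3).castSucc = (2 : Fin 4) from rfl] at hstepc2
    have heq : (A * A) * (c 0 * starRingEnd ℂ (c 0) + c 1 * starRingEnd ℂ (c 1)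
        + c 2 * starRingEnd ℂ (c 2))
        = (K * starRingEnd ℂ K) * (((Real.exp (ρ p) : ℝ) : ℂ) / 2) := by
      rw [← hsumabs]
      simp only [map_sub, map_mul, hnc 0, hnc 1, hnc 2]
      linear_combination (A * starRingEnd ℂ (c 0)) * hstep0 + (A * starRingEnd ℂ (c 1)) * hstep1
        + (A * starRingEnd ℂ (c 2)) * hstep2
        + (K * (starRingEnd ℂ (g 0) - n 0 * starRingEnd ℂ (g 3))) * hstepc0
        + (K * (starRingEnd ℂ (g 1) - n 1 * starRingEnd ℂ (g 3))) * hstepc1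
        + (K * (starRingEnd ℂ (g 2) - n 2 * starRingEnd ℂ (g 3))) * hstepc2
    intro hzero
    rw [hzero, mul_zero] at heq
    have hKc : starRingEnd ℂ K ≠ 0 := by
      intro h
      apply hKne
      have h2 := congrArg (starRingEnd ℂ) h
      simpa [Complex.conj_conj] using h2
    have hexp : (((Real.exp (ρ p) : ℝ) : ℂ) / 2) ≠ 0 := by
      simp [Real.exp_ne_zero]
    exact (mul_ne_zero (mul_ne_zero hKne hKc) hexp) heq.symm
  -- the derivative of ν
  have hνdiff : DifferentiableAt ℝ ν p :=
    ((hν.differentiableOn (by simp)).differentiableAt (hU.mem_nhds hp))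
  have hLv : ∀ v : ℂ, ∀ i : Fin 3, ((fderiv ℝ ν p v i : ℝ) : ℂ)
      = c i * v + starRingEnd ℂ (c i) * starRingEnd ℂ v := by
    intro v i
    have hdcomp : DifferentiableAt ℝ (fun z => ν z i) p :=
      ((ContinuousLinearMap.proj (R := ℝ) (φ := fun _ : Fin 3 => ℝ) i).differentiableAt).comp p hνdiff
    have hcomp : fderiv ℝ (fun z => ν z i) p
        = (ContinuousLinearMap.proj (R := ℝ) (φ := fun _ : Fin 3 => ℝ) i).comp (fderiv ℝ ν p) :=
      ((ContinuousLinearMap.proj (R := ℝ) (φ := fun _ : Fin 3 => ℝ) i).hasFDerivAt.comp p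
        hνdiff.hasFDerivAt).fderiv
    have h1 : fderiv ℝ (fun z => ν z i) p v = fderiv ℝ ν p v i := by rw [hcomp]; rfl
    have h2 : fderiv ℝ (fun z => ((ν z i : ℝ) : ℂ)) p v
        = ((fderiv ℝ (fun z => ν z i) p v : ℝ) : ℂ) := fderiv_ofReal_comp hdcomp v
    have h3 := fderiv_apply_eq (fun z => ((ν z i : ℝ) : ℂ)) p v
    rw [wbar_eq_conj_wder_real hdcomp] at h3
    rw [h2, h1] at h3
    exact h3
  have hker : ∀ v : ℂ, fderiv ℝ ν p v = 0 → v = 0 := by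
    intro v hv
    by_contra hv0
    have hre : ∀ i : Fin 3, (c i * v).re = 0 := by
      intro i
      have h := hLv v i
      rw [hv] at h
      simp only [Pi.zero_apply, Complex.ofReal_zero] at h
      have h2 : c i * v + starRingEnd ℂ (c i * v) = 0 := by
        rw [map_mul]; linear_combination -h
      rw [Complex.add_conj (c i * v)] at h2
      have h3 : (2 * (c i * v).re : ℝ) = (0 : ℝ) := by exact_mod_cast h2
      linarith
    have hsq : (c 0 * v) ^ 2 + (c 1 * v) ^ 2 + (c 2 * v) ^ 2 = 0 := by
      linear_combination v ^ 2 * hc2sum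
    have hresq := congrArg Complex.re hsq
    simp only [Complex.add_re, Complex.zero_re] at hresq
    have e0 : ((c 0 * v) ^ 2).re = (c 0 * v).re ^ 2 - (c 0 * v).im ^ 2 := by
      rw [sq, Complex.mul_re]; ring
    have e1 : ((c 1 * v) ^ 2).re = (c 1 * v).re ^ 2 - (c 1 * v).im ^ 2 := by
      rw [sq, Complex.mul_re]; ring
    have e2 : ((c 2 * v) ^ 2).re = (c 2 * v).re ^ 2 - (c 2 * v).im ^ 2 := by
      rw [sq, Complex.mul_re]; ring
    rw [e0, e1, e2, hre 0, hre 1, hre 2] at hresq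
    have him0 : (c 0 * v).im = 0 := by
      nlinarith [sq_nonneg (c 0 * v).im, sq_nonneg (c 1 * v).im, sq_nonneg (c 2 * v).im]
    have him1 : (c 1 * v).im = 0 := by
      nlinarith [sq_nonneg (c 0 * v).im, sq_nonneg (c 1 * v).im, sq_nonneg (c 2 * v).im]
    have him2 : (c 2 * v).im = 0 := by
      nlinarith [sq_nonneg (c 0 * v).im, sq_nonneg (c 1 * v).im, sq_nonneg (c 2 * v).im]
    have hcz : ∀ i : Fin 3, (c i * v).re = 0 → (c i * v).im = 0 → c i = 0 := by
      intro i hr hi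
      have : c i * v = 0 := Complex.ext hr hi
      exact (mul_eq_zero.mp this).resolve_right hv0
    apply hcabs
    rw [hcz 0 (hre 0) him0, hcz 1 (hre 1) him1, hcz 2 (hre 2) him2]
    simp
  have hLinj : Function.Injective (fderiv ℝ ν p) := by
    intro a b hab
    have h1 : fderiv ℝ ν p (a - b) = 0 := by rw [map_sub, hab, sub_self]
    have := hker _ h1
    exact sub_eq_zero.mp this
  have hLne : fderiv ℝ ν p ≠ 0 := by
    intro h
    have h1 : fderiv ℝ ν p 1 = fderiv ℝ ν p 0 := by rw [h]; simp
    have := hLinj h1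
    norm_num at this
  have hstrict : HasStrictFDerivAt ν (fderiv ℝ ν p) p :=
    (hν.contDiffAt (hU.mem_nhds hp)).hasStrictFDerivAt (by simp)
  exact ⟨hLne, exists_injOn_of_hasStrictFDerivAt hstrict hLinj⟩

theorem stmt19_spherical_graph_near_nonflat_points
    (U : Set ℂ) (hU : IsOpen U)
    (X : ℂ → Fin 4 → ℝ) (ξ η : ℂ → Fin 4 → ℝ) (ρ : ℂ → ℝ) (φ ψ σ : ℂ → ℂ)
    (ν₁ ν₂ : ℂ → Fin 3 → ℝ) (α β : ℂ → ℝ)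
    (hX : ContDiffOn ℝ (⊤ : ℕ∞) X U) (hξ : ContDiffOn ℝ (⊤ : ℕ∞) ξ U) (hη : ContDiffOn ℝ (⊤ : ℕ∞) η U)
    (hρ : ContDiffOn ℝ (⊤ : ℕ∞) ρ U) (hφ : ContDiffOn ℝ (⊤ : ℕ∞) φ U) (hψ : ContDiffOn ℝ (⊤ : ℕ∞) ψ U)
    (hσ : ContDiffOn ℝ (⊤ : ℕ∞) σ U) (hν₁ : ContDiffOn ℝ (⊤ : ℕ∞) ν₁ U) (hν₂ : ContDiffOn ℝ (⊤ : ℕ∞) ν₂ U)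
    -- z is an isothermal coordinate: induced metric e^ρ|dz|² (spacelike) :
    (hconf : ∀ z ∈ U, minkC (cz X z) (cz X z) = 0 ∧
      minkC (cz X z) (fun i => starRingEnd ℂ (cz X z i)) = (Real.exp (ρ z) / 2 : ℝ))
    -- {ξ, η} is a null frame of the normal bundle, ξ·η = 1 :
    (hnull : ∀ z ∈ U, minkR (ξ z) (ξ z) = 0 ∧ minkR (η z) (η z) = 0 ∧
      minkR (ξ z) (η z) = 1)
    (hnormal : ∀ z ∈ U, minkC (cz X z) (fun i => ((ξ z i : ℝ) : ℂ)) = 0 ∧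
      minkC (cz X z) (fun i => ((η z i : ℝ) : ℂ)) = 0)
    -- the Frenet equations :
    (hFrenet : ∀ z ∈ U, ∀ i, dz (cz X) z i =
      wder (fun w => ((ρ w : ℝ) : ℂ)) z * cz X z i + (φ z / 2) * (ξ z i : ℂ)
        + (ψ z / 2) * (η z i : ℂ))
    -- zero mean curvature: X_{zz̄} = 0 :
    (hharm : ∀ z ∈ U, ∀ i, dzbar (cz X) z i = 0)
    (hxiz : ∀ z ∈ U, ∀ i, cz ξ z i =
      -ψ z * Complex.exp (-(ρ z : ℂ)) * starRingEnd ℂ (cz X z i) + σ z * (ξ z i : ℂ))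
    (hetaz : ∀ z ∈ U, ∀ i, cz η z i =
      -φ z * Complex.exp (-(ρ z : ℂ)) * starRingEnd ℂ (cz X z i) - σ z * (η z i : ℂ))
    -- the null normal directions written as ξ = α(ν₁,1), η = β(ν₂,1), νᵢ ∈ S² :
    (hα : ∀ z ∈ U, α z ≠ 0) (hβ : ∀ z ∈ U, β z ≠ 0)
    (hξν : ∀ z ∈ U, (∀ i : Fin 3, ξ z i.castSucc = α z * ν₁ z i) ∧ ξ z 3 = α z)
    (hην : ∀ z ∈ U, (∀ i : Fin 3, η z i.castSucc = β z * ν₂ z i) ∧ η z 3 = β z)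
    (hν₁S : ∀ z ∈ U, ∑ i : Fin 3, (ν₁ z i)^2 = 1) (hν₂S : ∀ z ∈ U, ∑ i : Fin 3, (ν₂ z i)^2 = 1)
    -- a point p where the Gauss curvature K = −2e^{−ρ}ρ_{zz̄} does not vanish :
    (p : ℂ) (hp : p ∈ U)
    (hK : (-2 : ℂ) * Complex.exp (-(ρ p : ℂ)) * wder (wbar fun w => ((ρ w : ℝ) : ℂ)) p ≠ 0) :
    fderiv ℝ ν₁ p ≠ 0 ∧ fderiv ℝ ν₂ p ≠ 0 ∧
    (∃ V ∈ nhds p, Set.InjOn ν₁ V) ∧ (∃ V ∈ nhds p, Set.InjOn ν₂ V) := by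
  have hG := gauss_step U hU X ξ η ρ φ ψ σ hX hξ hη hρ hφ hψ hconf hnormal hFrenet hharm
    hxiz hetaz p hp hK
  have hA1 := aux_main U hU X ξ ρ ψ σ ν₁ α hX hξ hν₁ hconf (fun z hz => (hnormal z hz).1)
    hxiz hα hξν hν₁S p hp hG.2
  have hetaz' : ∀ z ∈ U, ∀ i, cz η z i =
      -φ z * Complex.exp (-(ρ z : ℂ)) * starRingEnd ℂ (cz X z i) + (fun z => -σ z) z * (η z i : ℂ) := by
    intro z hz i
    rw [hetaz z hz i]
    ring
  have hA2 := aux_main U hU X η ρ φ (fun z => -σ z) ν₂ β hX hη hν₂ hconf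
    (fun z hz => (hnormal z hz).2) hetaz' hβ hην hν₂S p hp hG.1
  exact ⟨hA1.1, hA2.1, hA1.2, hA2.2⟩
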